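/- The caterpillar tree Cat(4,3,4,3,3,4) (of length 6, with σ = 6) is 6-two-sided strong edge-pre-colorable. -/
import Mathlib


open SimpleGraph

/-- The degree of a vertex (cardinality of its neighbor set). -/
noncomputable def ndeg {V : Type*} (G : SimpleGraph V) (v : V) : ℕ :=
  (G.neighborSet v).ncard

/-- `σ(G)`: the maximum of `deg x + deg y - 1` over all edges `xy` of `G`. -/
noncomputable def sigmaG {V : Type*} (G : SimpleGraph V) : ℕ :=
  sSup {m | ∃ x y, G.Adj x y ∧ m = ndeg G x + ndeg G y - 1}

/-- The maximum degree `Δ(G)`. -/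
noncomputable def maxDeg {V : Type*} (G : SimpleGraph V) : ℕ :=
  sSup (Set.range (ndeg G))

/-- Two edges are at distance at most two: they share an endpoint, or an endpoint of
one is adjacent to an endpoint of the other. -/
def EdgesNear {V : Type*} (G : SimpleGraph V) (e f : Sym2 V) : Prop :=
  ∃ u v, u ∈ e ∧ v ∈ f ∧ (u = v ∨ G.Adj u v)

/-- A strong edge-coloring: every two distinct edges at distance at most two
receive different colors. -/
def IsStrongEdgeColoring {V α : Type*} (G : SimpleGraph V) (φ : Sym2 V → α) : Prop :=
  ∀ e ∈ G.edgeSet, ∀ f ∈ G.edgeSet, e ≠ f → EdgesNear G e f → φ e ≠ φ f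

/-- The strong chromatic index `χ'ₛ(G)`: the least `k` such that `G` has a strong
edge-coloring with colors `0, …, k-1`. -/
noncomputable def strongChromaticIndex {V : Type*} (G : SimpleGraph V) : ℕ :=
  sInf {k | ∃ φ : Sym2 V → ℕ, (∀ e ∈ G.edgeSet, φ e < k) ∧ IsStrongEdgeColoring G φ}

/-- The set of edges incident with a vertex `v`. -/
def Einc {V : Type*} (G : SimpleGraph V) (v : V) : Set (Sym2 V) :=
  {e ∈ G.edgeSet | v ∈ e}
/-- The vertex type of the caterpillar tree `Cat(d 1, …, d ℓ)`: the spine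
`x_0, x_1, …, x_{ℓ+1}` (as `Fin (ℓ+2)`) together with `d (i+1) - 2` pendant leaves
attached to the spine vertex `x_{i+1}` for each `i : Fin ℓ`. -/
abbrev CatV (ℓ : ℕ) (d : ℕ → ℕ) : Type :=
  Fin (ℓ + 2) ⊕ (Σ i : Fin ℓ, Fin (d (i.val + 1) - 2))

/-- Generating relation for the caterpillar: consecutive spine vertices are adjacent,
and each leaf in the `i`-th leaf group is adjacent to the spine vertex `x_{i+1}`. -/
def CatRel (ℓ : ℕ) (d : ℕ → ℕ) : CatV ℓ d → CatV ℓ d → Prop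
  | Sum.inl i, Sum.inl j => (j : ℕ) = (i : ℕ) + 1
  | Sum.inr p, Sum.inl k => (k : ℕ) = (p.1 : ℕ) + 1
  | _, _ => False

/-- The caterpillar tree `Cat(d 1, …, d ℓ)` with spine `x_0, …, x_{ℓ+1}`, in which
the spine vertex `x_i` has degree `d i` for `1 ≤ i ≤ ℓ` (provided `d i ≥ 2`). -/
def Cat (ℓ : ℕ) (d : ℕ → ℕ) : SimpleGraph (CatV ℓ d) :=
  SimpleGraph.fromRel (CatRel ℓ d)

/-- There exists a strong edge-coloring `φ` of `Cat ℓ d` using colors from `C` with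
`φ(E 1) = C₁`, `φ(E ℓ) = Cl`, `φ(x₀x₁) = α₀` and `φ(x_ℓ x_{ℓ+1}) = αl`. -/
def CatPrecolorExists (ℓ : ℕ) (d : ℕ → ℕ) (C C₁ Cl : Finset ℕ) (α₀ αl : ℕ) : Prop :=
  ∃ φ : Sym2 (CatV ℓ d) → ℕ,
    (∀ e ∈ (Cat ℓ d).edgeSet, φ e ∈ C) ∧
    IsStrongEdgeColoring (Cat ℓ d) φ ∧
    φ '' Einc (Cat ℓ d) (Sum.inl ⟨1, by omega⟩) = ↑C₁ ∧
    φ '' Einc (Cat ℓ d) (Sum.inl ⟨ℓ, by omega⟩) = ↑Cl ∧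
    φ s(Sum.inl ⟨0, by omega⟩, Sum.inl ⟨1, by omega⟩) = α₀ ∧
    φ s(Sum.inl ⟨ℓ, by omega⟩, Sum.inl ⟨ℓ + 1, by omega⟩) = αl

/-- `Cat ℓ d` is `κ`-two-sided strong edge-pre-colorable: for every `κ`-set `C` of colors,
all `C₁, Cl ⊆ C` with `|C₁| = d 1`, `|Cl| = d ℓ`, and all `α₀ ∈ C₁`, `αl ∈ Cl`, there is
a strong edge-coloring `φ` of `Cat ℓ d` with colors from `C` such that `φ(E 1) = C₁`,
`φ(E ℓ) = Cl`, `φ(x₀x₁) = α₀` and `φ(x_ℓ x_{ℓ+1}) = αl`. -/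
def TwoSidedPrecolorable (ℓ : ℕ) (d : ℕ → ℕ) (κ : ℕ) : Prop :=
  ∀ C C₁ Cl : Finset ℕ, C.card = κ → C₁ ⊆ C → Cl ⊆ C →
    C₁.card = d 1 → Cl.card = d ℓ →
    ∀ α₀ ∈ C₁, ∀ αl ∈ Cl, CatPrecolorExists ℓ d C C₁ Cl α₀ αl

/-- `ℓ_σ` from the refined key lemma: `ℓ_5 = 8`, `ℓ_6 = ℓ_7 = 7`, `ℓ_σ = σ` for `σ ≥ 8`. -/
def ellSigma (s : ℕ) : ℕ :=
  if s = 5 then 8 else if s ≤ 7 then 7 else s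


/-! ### Auxiliary setup for the caterpillar `Cat(4,3,4,3,3,4)` -/

abbrev DD : ℕ → ℕ := fun i => if i = 1 ∨ i = 3 ∨ i = 6 then 4 else 3
abbrev VV : Type := CatV 6 DD

instance decCatRel : ∀ x y : VV, Decidable (CatRel 6 DD x y)
  | Sum.inl i, Sum.inl j => inferInstanceAs (Decidable ((j : ℕ) = (i : ℕ) + 1))
  | Sum.inr p, Sum.inl k => inferInstanceAs (Decidable ((k : ℕ) = (p.1 : ℕ) + 1))
  | Sum.inl _, Sum.inr _ => inferInstanceAs (Decidable False)
  | Sum.inr _, Sum.inr _ => inferInstanceAs (Decidable False)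

instance decAdjDD : DecidableRel (Cat 6 DD).Adj := fun a b =>
  decidable_of_iff _ (SimpleGraph.fromRel_adj (CatRel 6 DD) a b).symm

def hIdx : VV → ℕ
  | Sum.inl i => i.val
  | Sum.inr ⟨i, j⟩ => 8 + [0, 2, 3, 5, 6, 7].getD i.val 0 + j.val

def labF (u v : VV) : ℕ := max (hIdx u) (hIdx v)

def labD : Sym2 VV → ℕ := Sym2.lift ⟨labF, fun _ _ => Nat.max_comm _ _⟩

@[simp] theorem labD_mk (u v : VV) : labD s(u, v) = labF u v := rfl

def lv (a : ℕ) : ℕ :=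
  if a ≤ 9 then 1 else if a = 10 then 2 else if a ≤ 12 then 3
  else if a = 13 then 4 else if a = 14 then 5 else 6

def lonum (a : ℕ) : ℕ := if a ≤ 7 then a - 1 else lv a
def hinum (a : ℕ) : ℕ := if a ≤ 7 then a else lv a

def nearPair (a b : ℕ) : Bool := decide (lonum b ≤ hinum a + 1 ∧ lonum a ≤ hinum b + 1)

def colF (x1 x2 x3 x4 x5 x6 x7 x8 x9 x10 x11 x12 x13 x14 x15 x16 : ℕ) : ℕ → ℕ
  | 1 => x1 | 2 => x2 | 3 => x3 | 4 => x4 | 5 => x5 | 6 => x6 | 7 => x7 | 8 => x8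
  | 9 => x9 | 10 => x10 | 11 => x11 | 12 => x12 | 13 => x13 | 14 => x14 | 15 => x15
  | 16 => x16 | _ => 0

def x0v : VV := Sum.inl ⟨0, by norm_num⟩
def x1v : VV := Sum.inl ⟨1, by norm_num⟩
def x2v : VV := Sum.inl ⟨2, by norm_num⟩
def x5v : VV := Sum.inl ⟨5, by norm_num⟩
def x6v : VV := Sum.inl ⟨6, by norm_num⟩
def x7v : VV := Sum.inl ⟨7, by norm_num⟩
def l00v : VV := Sum.inr ⟨⟨0, by norm_num⟩, ⟨0, by decide⟩⟩
def l01v : VV := Sum.inr ⟨⟨0, by norm_num⟩, ⟨1, by decide⟩⟩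
def l50v : VV := Sum.inr ⟨⟨5, by norm_num⟩, ⟨0, by decide⟩⟩
def l51v : VV := Sum.inr ⟨⟨5, by norm_num⟩, ⟨1, by decide⟩⟩

theorem adj01 : (Cat 6 DD).Adj x0v x1v := by decide
theorem adj12 : (Cat 6 DD).Adj x1v x2v := by decide
theorem adjl00 : (Cat 6 DD).Adj l00v x1v := by decide
theorem adjl01 : (Cat 6 DD).Adj l01v x1v := by decide
theorem adj56 : (Cat 6 DD).Adj x5v x6v := by decide
theorem adj67 : (Cat 6 DD).Adj x6v x7v := by decide
theorem adjl50 : (Cat 6 DD).Adj l50v x6v := by decide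
theorem adjl51 : (Cat 6 DD).Adj l51v x6v := by decide

set_option synthInstance.maxSize 5000 in
set_option maxRecDepth 100000 in
set_option maxHeartbeats 3000000 in
theorem keyDec : ∀ u₁ v₁ u₂ v₂ : VV, (Cat 6 DD).Adj u₁ v₁ → (Cat 6 DD).Adj u₂ v₂ →
    ¬(u₁ = u₂ ∧ v₁ = v₂) → ¬(u₁ = v₂ ∧ v₁ = u₂) →
    ((u₁ = u₂ ∨ (Cat 6 DD).Adj u₁ u₂) ∨ (u₁ = v₂ ∨ (Cat 6 DD).Adj u₁ v₂) ∨
     (v₁ = u₂ ∨ (Cat 6 DD).Adj v₁ u₂) ∨ (v₁ = v₂ ∨ (Cat 6 DD).Adj v₁ v₂)) →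
    (labF u₁ v₁ ≠ labF u₂ v₂ ∧ nearPair (labF u₁ v₁) (labF u₂ v₂) = true) := by decide

set_option synthInstance.maxSize 5000 in
set_option maxRecDepth 100000 in
set_option maxHeartbeats 1000000 in
theorem memDec : ∀ u v : VV, (Cat 6 DD).Adj u v → 1 ≤ labF u v ∧ labF u v ≤ 16 := by decide

set_option synthInstance.maxSize 5000 in
set_option maxRecDepth 100000 in
set_option maxHeartbeats 1000000 in
theorem E1lab : ∀ u v : VV, (Cat 6 DD).Adj u v → (x1v = u ∨ x1v = v) →
    (labF u v = 1 ∨ labF u v = 2 ∨ labF u v = 8 ∨ labF u v = 9) := by decide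

set_option synthInstance.maxSize 5000 in
set_option maxRecDepth 100000 in
set_option maxHeartbeats 1000000 in
theorem E6lab : ∀ u v : VV, (Cat 6 DD).Adj u v → (x6v = u ∨ x6v = v) →
    (labF u v = 6 ∨ labF u v = 7 ∨ labF u v = 15 ∨ labF u v = 16) := by decide

theorem pick3 (S : Finset ℕ) (hS : 4 ≤ S.card) (a b c : ℕ) :
    ∃ x, x ∈ S ∧ x ≠ a ∧ x ≠ b ∧ x ≠ c := by
  have h2 : ({a, b, c} : Finset ℕ).card ≤ 3 := by
    apply le_trans (Finset.card_insert_le _ _)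
    have h3 : ({b, c} : Finset ℕ).card ≤ 2 := by
      apply le_trans (Finset.card_insert_le _ _)
      simp
    omega
  have h3 := Finset.card_le_card_sdiff_add_card (s := S) (t := {a, b, c})
  obtain ⟨x, hx⟩ := Finset.card_pos.mp (show 0 < (S \ {a, b, c}).card by omega)
  obtain ⟨hxS, hxn⟩ := Finset.mem_sdiff.mp hx
  refine ⟨x, hxS, ?_, ?_, ?_⟩ <;> intro h <;> exact hxn (by simp [h])

theorem pair_other {S : Finset ℕ} {u v q : ℕ} (huv : u ≠ v) (hS : S = {u, v}) (hq : q ∈ S) :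
    ∃ w, w ≠ q ∧ S = {q, w} := by
  subst hS
  rcases Finset.mem_insert.mp hq with rfl | hq'
  · exact ⟨v, Ne.symm huv, rfl⟩
  · have hv : q = v := Finset.mem_singleton.mp hq'
    subst hv
    exact ⟨u, huv, Finset.pair_comm u q⟩

set_option maxHeartbeats 2000000 in
theorem colNe (a0 d p s3 s4 s5 al b c q e3a e3b L4 L5 f6a f6b : ℕ)
    (hne1_2 : a0 ≠ d) (hne1_3 : a0 ≠ p) (hne1_8 : a0 ≠ b) (hne1_9 : a0 ≠ c) (hne1_10 : a0 ≠ q) (hne2_3 : d ≠ p) (hne2_4 : d ≠ s3) (hne2_8 : d ≠ b) (hne2_9 : d ≠ c) (hne2_10 : d ≠ q) (hne2_11 : d ≠ e3a) (hne2_12 : d ≠ e3b) (hne3_4 : p ≠ s3) (hne3_5 : p ≠ s4) (hne3_8 : p ≠ b) (hne3_9 : p ≠ c) (hne3_10 : p ≠ q) (hne3_11 : p ≠ e3a) (hne3_12 : p ≠ e3b) (hne3_13 : p ≠ L4) (hne4_5 : s3 ≠ s4) (hne4_6 : s3 ≠ s5) (hne4_10 : s3 ≠ q) (hne4_11 : s3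 ≠ e3a) (hne4_12 : s3 ≠ e3b) (hne4_13 : s3 ≠ L4) (hne4_14 : s3 ≠ L5) (hne5_6 : s4 ≠ s5) (hne5_7 : s4 ≠ al) (hne5_11 : s4 ≠ e3a) (hne5_12 : s4 ≠ e3b) (hne5_13 : s4 ≠ L4) (hne5_14 : s4 ≠ L5) (hne5_15 : s4 ≠ f6a) (hne5_16 : s4 ≠ f6b) (hne6_7 : s5 ≠ al) (hne6_13 : s5 ≠ L4) (hne6_14 : s5 ≠ L5) (hne6_15 : s5 ≠ f6a) (hne6_16 : s5 ≠ f6b) (hne7_14 : al ≠ L5) (hne7_15 : al ≠ f6a) (hne7_16 : al ≠ f6b) (hne8_9 : b ≠ c) (hne8_10 : b ≠ q) (hne9_10 : c ≠ q) (hne10_11 : q ≠ e3a) (hne10_12 : q ≠ e3b) (hne11_12 : e3a ≠ e3b) (hne11_13 : e3a ≠ L4) (hne12_13 : e3b ≠ L4) (hne13_14 : L4 ≠ L5) (hne14_15 : L5 ≠ f6a) (hne14_16 : L5 ≠ f6b) (hne15_16 : f6a ≠ f6b) :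
    ∀ m n : ℕ, 1 ≤ m → m ≤ 16 → 1 ≤ n → n ≤ 16 → m ≠ n → nearPair m n = true →
      colF a0 d p s3 s4 s5 al b c q e3a e3b L4 L5 f6a f6b m ≠ colF a0 d p s3 s4 s5 al b c q e3a e3b L4 L5 f6a f6b n := by
  intro m n hm1 hm2 hn1 hn2 hmn hnp
  rcases (by omega : m = 1 ∨ m = 2 ∨ m = 3 ∨ m = 4 ∨ m = 5 ∨ m = 6 ∨ m = 7 ∨ m = 8 ∨ m = 9 ∨ m = 10 ∨ m = 11 ∨ m = 12 ∨ m = 13 ∨ m = 14 ∨ m = 15 ∨ m = 16) with rfl|rfl|rfl|rfl|rfl|rfl|rfl|rfl|rfl|rfl|rfl|rfl|rfl|rfl|rfl|rfl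
  · rcases (by omega : n = 1 ∨ n = 2 ∨ n = 3 ∨ n = 4 ∨ n = 5 ∨ n = 6 ∨ n = 7 ∨ n = 8 ∨ n = 9 ∨ n = 10 ∨ n = 11 ∨ n = 12 ∨ n = 13 ∨ n = 14 ∨ n = 15 ∨ n = 16) with rfl|rfl|rfl|rfl|rfl|rfl|rfl|rfl|rfl|rfl|rfl|rfl|rfl|rfl|rfl|rfl
    · exact absurd rfl hmn
    · exact hne1_2
    · exact hne1_3
    · exact absurd hnp (by decide)
    · exact absurd hnp (by decide)
    · exact absurd hnp (by decide)
    · exact absurd hnp (by decide)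
    · exact hne1_8
    · exact hne1_9
    · exact hne1_10
    · exact absurd hnp (by decide)
    · exact absurd hnp (by decide)
    · exact absurd hnp (by decide)
    · exact absurd hnp (by decide)
    · exact absurd hnp (by decide)
    · exact absurd hnp (by decide)
  · rcases (by omega : n = 1 ∨ n = 2 ∨ n = 3 ∨ n = 4 ∨ n = 5 ∨ n = 6 ∨ n = 7 ∨ n = 8 ∨ n = 9 ∨ n = 10 ∨ n = 11 ∨ n = 12 ∨ n = 13 ∨ n = 14 ∨ n = 15 ∨ n = 16) with rfl|rfl|rfl|rfl|rfl|rfl|rfl|rfl|rfl|rfl|rfl|rfl|rfl|rfl|rfl|rfl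
    · exact (hne1_2).symm
    · exact absurd rfl hmn
    · exact hne2_3
    · exact hne2_4
    · exact absurd hnp (by decide)
    · exact absurd hnp (by decide)
    · exact absurd hnp (by decide)
    · exact hne2_8
    · exact hne2_9
    · exact hne2_10
    · exact hne2_11
    · exact hne2_12
    · exact absurd hnp (by decide)
    · exact absurd hnp (by decide)
    · exact absurd hnp (by decide)
    · exact absurd hnp (by decide)
  · rcases (by omega : n = 1 ∨ n = 2 ∨ n = 3 ∨ n = 4 ∨ n = 5 ∨ n = 6 ∨ n = 7 ∨ n = 8 ∨ n = 9 ∨ n = 10 ∨ n = 11 ∨ n = 12 ∨ n = 13 ∨ n = 14 ∨ n = 15 ∨ n = 16) with rfl|rfl|rfl|rfl|rfl|rfl|rfl|rfl|rfl|rfl|rfl|rfl|rfl|rfl|rfl|rfl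
    · exact (hne1_3).symm
    · exact (hne2_3).symm
    · exact absurd rfl hmn
    · exact hne3_4
    · exact hne3_5
    · exact absurd hnp (by decide)
    · exact absurd hnp (by decide)
    · exact hne3_8
    · exact hne3_9
    · exact hne3_10
    · exact hne3_11
    · exact hne3_12
    · exact hne3_13
    · exact absurd hnp (by decide)
    · exact absurd hnp (by decide)
    · exact absurd hnp (by decide)
  · rcases (by omega : n = 1 ∨ n = 2 ∨ n = 3 ∨ n = 4 ∨ n = 5 ∨ n = 6 ∨ n = 7 ∨ n = 8 ∨ n = 9 ∨ n = 10 ∨ n = 11 ∨ n = 12 ∨ n = 13 ∨ n = 14 ∨ n = 15 ∨ n = 16) with rfl|rfl|rfl|rfl|rfl|rfl|rfl|rfl|rfl|rfl|rfl|rfl|rfl|rfl|rfl|rfl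
    · exact absurd hnp (by decide)
    · exact (hne2_4).symm
    · exact (hne3_4).symm
    · exact absurd rfl hmn
    · exact hne4_5
    · exact hne4_6
    · exact absurd hnp (by decide)
    · exact absurd hnp (by decide)
    · exact absurd hnp (by decide)
    · exact hne4_10
    · exact hne4_11
    · exact hne4_12
    · exact hne4_13
    · exact hne4_14
    · exact absurd hnp (by decide)
    · exact absurd hnp (by decide)
  · rcases (by omega : n = 1 ∨ n = 2 ∨ n = 3 ∨ n = 4 ∨ n = 5 ∨ n = 6 ∨ n = 7 ∨ n = 8 ∨ n = 9 ∨ n = 10 ∨ n = 11 ∨ n = 12 ∨ n = 13 ∨ n = 14 ∨ n = 15 ∨ n = 16) with rfl|rfl|rfl|rfl|rfl|rfl|rfl|rfl|rfl|rfl|rfl|rfl|rfl|rfl|rfl|rfl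
    · exact absurd hnp (by decide)
    · exact absurd hnp (by decide)
    · exact (hne3_5).symm
    · exact (hne4_5).symm
    · exact absurd rfl hmn
    · exact hne5_6
    · exact hne5_7
    · exact absurd hnp (by decide)
    · exact absurd hnp (by decide)
    · exact absurd hnp (by decide)
    · exact hne5_11
    · exact hne5_12
    · exact hne5_13
    · exact hne5_14
    · exact hne5_15
    · exact hne5_16
  · rcases (by omega : n = 1 ∨ n = 2 ∨ n = 3 ∨ n = 4 ∨ n = 5 ∨ n = 6 ∨ n = 7 ∨ n = 8 ∨ n = 9 ∨ n = 10 ∨ n = 11 ∨ n = 12 ∨ n = 13 ∨ n = 14 ∨ n = 15 ∨ n = 16) with rfl|rfl|rfl|rfl|rfl|rfl|rfl|rfl|rfl|rfl|rfl|rfl|rfl|rfl|rfl|rfl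
    · exact absurd hnp (by decide)
    · exact absurd hnp (by decide)
    · exact absurd hnp (by decide)
    · exact (hne4_6).symm
    · exact (hne5_6).symm
    · exact absurd rfl hmn
    · exact hne6_7
    · exact absurd hnp (by decide)
    · exact absurd hnp (by decide)
    · exact absurd hnp (by decide)
    · exact absurd hnp (by decide)
    · exact absurd hnp (by decide)
    · exact hne6_13
    · exact hne6_14
    · exact hne6_15
    · exact hne6_16
  · rcases (by omega : n = 1 ∨ n = 2 ∨ n = 3 ∨ n = 4 ∨ n = 5 ∨ n = 6 ∨ n = 7 ∨ n = 8 ∨ n = 9 ∨ n = 10 ∨ n = 11 ∨ n = 12 ∨ n = 13 ∨ n = 14 ∨ n = 15 ∨ n = 16) with rfl|rfl|rfl|rfl|rfl|rfl|rfl|rfl|rfl|rfl|rfl|rfl|rfl|rfl|rfl|rfl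
    · exact absurd hnp (by decide)
    · exact absurd hnp (by decide)
    · exact absurd hnp (by decide)
    · exact absurd hnp (by decide)
    · exact (hne5_7).symm
    · exact (hne6_7).symm
    · exact absurd rfl hmn
    · exact absurd hnp (by decide)
    · exact absurd hnp (by decide)
    · exact absurd hnp (by decide)
    · exact absurd hnp (by decide)
    · exact absurd hnp (by decide)
    · exact absurd hnp (by decide)
    · exact hne7_14
    · exact hne7_15
    · exact hne7_16
  · rcases (by omega : n = 1 ∨ n = 2 ∨ n = 3 ∨ n = 4 ∨ n = 5 ∨ n = 6 ∨ n = 7 ∨ n = 8 ∨ n = 9 ∨ n = 10 ∨ n = 11 ∨ n = 12 ∨ n = 13 ∨ n = 14 ∨ n = 15 ∨ n = 16) with rfl|rfl|rfl|rfl|rfl|rfl|rfl|rfl|rfl|rfl|rfl|rfl|rfl|rfl|rfl|rfl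
    · exact (hne1_8).symm
    · exact (hne2_8).symm
    · exact (hne3_8).symm
    · exact absurd hnp (by decide)
    · exact absurd hnp (by decide)
    · exact absurd hnp (by decide)
    · exact absurd hnp (by decide)
    · exact absurd rfl hmn
    · exact hne8_9
    · exact hne8_10
    · exact absurd hnp (by decide)
    · exact absurd hnp (by decide)
    · exact absurd hnp (by decide)
    · exact absurd hnp (by decide)
    · exact absurd hnp (by decide)
    · exact absurd hnp (by decide)
  · rcases (by omega : n = 1 ∨ n = 2 ∨ n = 3 ∨ n = 4 ∨ n = 5 ∨ n = 6 ∨ n = 7 ∨ n = 8 ∨ n = 9 ∨ n = 10 ∨ n = 11 ∨ n = 12 ∨ n = 13 ∨ n = 14 ∨ n = 15 ∨ n = 16) with rfl|rfl|rfl|rfl|rfl|rfl|rfl|rfl|rfl|rfl|rfl|rfl|rfl|rfl|rfl|rfl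
    · exact (hne1_9).symm
    · exact (hne2_9).symm
    · exact (hne3_9).symm
    · exact absurd hnp (by decide)
    · exact absurd hnp (by decide)
    · exact absurd hnp (by decide)
    · exact absurd hnp (by decide)
    · exact (hne8_9).symm
    · exact absurd rfl hmn
    · exact hne9_10
    · exact absurd hnp (by decide)
    · exact absurd hnp (by decide)
    · exact absurd hnp (by decide)
    · exact absurd hnp (by decide)
    · exact absurd hnp (by decide)
    · exact absurd hnp (by decide)
  · rcases (by omega : n = 1 ∨ n = 2 ∨ n = 3 ∨ n = 4 ∨ n = 5 ∨ n = 6 ∨ n = 7 ∨ n = 8 ∨ n = 9 ∨ n = 10 ∨ n = 11 ∨ n = 12 ∨ n = 13 ∨ n = 14 ∨ n = 15 ∨ n = 16) with rfl|rfl|rfl|rfl|rfl|rfl|rfl|rfl|rfl|rfl|rfl|rfl|rfl|rfl|rfl|rfl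
    · exact (hne1_10).symm
    · exact (hne2_10).symm
    · exact (hne3_10).symm
    · exact (hne4_10).symm
    · exact absurd hnp (by decide)
    · exact absurd hnp (by decide)
    · exact absurd hnp (by decide)
    · exact (hne8_10).symm
    · exact (hne9_10).symm
    · exact absurd rfl hmn
    · exact hne10_11
    · exact hne10_12
    · exact absurd hnp (by decide)
    · exact absurd hnp (by decide)
    · exact absurd hnp (by decide)
    · exact absurd hnp (by decide)
  · rcases (by omega : n = 1 ∨ n = 2 ∨ n = 3 ∨ n = 4 ∨ n = 5 ∨ n = 6 ∨ n = 7 ∨ n = 8 ∨ n = 9 ∨ n = 10 ∨ n = 11 ∨ n = 12 ∨ n = 13 ∨ n = 14 ∨ n = 15 ∨ n = 16) with rfl|rfl|rfl|rfl|rfl|rfl|rfl|rfl|rfl|rfl|rfl|rfl|rfl|rfl|rfl|rfl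
    · exact absurd hnp (by decide)
    · exact (hne2_11).symm
    · exact (hne3_11).symm
    · exact (hne4_11).symm
    · exact (hne5_11).symm
    · exact absurd hnp (by decide)
    · exact absurd hnp (by decide)
    · exact absurd hnp (by decide)
    · exact absurd hnp (by decide)
    · exact (hne10_11).symm
    · exact absurd rfl hmn
    · exact hne11_12
    · exact hne11_13
    · exact absurd hnp (by decide)
    · exact absurd hnp (by decide)
    · exact absurd hnp (by decide)
  · rcases (by omega : n = 1 ∨ n = 2 ∨ n = 3 ∨ n = 4 ∨ n = 5 ∨ n = 6 ∨ n = 7 ∨ n = 8 ∨ n = 9 ∨ n = 10 ∨ n = 11 ∨ n = 12 ∨ n = 13 ∨ n = 14 ∨ n = 15 ∨ n = 16) with rfl|rfl|rfl|rfl|rfl|rfl|rfl|rfl|rfl|rfl|rfl|rfl|rfl|rfl|rfl|rfl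
    · exact absurd hnp (by decide)
    · exact (hne2_12).symm
    · exact (hne3_12).symm
    · exact (hne4_12).symm
    · exact (hne5_12).symm
    · exact absurd hnp (by decide)
    · exact absurd hnp (by decide)
    · exact absurd hnp (by decide)
    · exact absurd hnp (by decide)
    · exact (hne10_12).symm
    · exact (hne11_12).symm
    · exact absurd rfl hmn
    · exact hne12_13
    · exact absurd hnp (by decide)
    · exact absurd hnp (by decide)
    · exact absurd hnp (by decide)
  · rcases (by omega : n = 1 ∨ n = 2 ∨ n = 3 ∨ n = 4 ∨ n = 5 ∨ n = 6 ∨ n = 7 ∨ n = 8 ∨ n = 9 ∨ n = 10 ∨ n = 11 ∨ n = 12 ∨ n = 13 ∨ n = 14 ∨ n = 15 ∨ n = 16) with rfl|rfl|rfl|rfl|rfl|rfl|rfl|rfl|rfl|rfl|rfl|rfl|rfl|rfl|rfl|rfl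
    · exact absurd hnp (by decide)
    · exact absurd hnp (by decide)
    · exact (hne3_13).symm
    · exact (hne4_13).symm
    · exact (hne5_13).symm
    · exact (hne6_13).symm
    · exact absurd hnp (by decide)
    · exact absurd hnp (by decide)
    · exact absurd hnp (by decide)
    · exact absurd hnp (by decide)
    · exact (hne11_13).symm
    · exact (hne12_13).symm
    · exact absurd rfl hmn
    · exact hne13_14
    · exact absurd hnp (by decide)
    · exact absurd hnp (by decide)
  · rcases (by omega : n = 1 ∨ n = 2 ∨ n = 3 ∨ n = 4 ∨ n = 5 ∨ n = 6 ∨ n = 7 ∨ n = 8 ∨ n = 9 ∨ n = 10 ∨ n = 11 ∨ n = 12 ∨ n = 13 ∨ n = 14 ∨ n = 15 ∨ n = 16) with rfl|rfl|rfl|rfl|rfl|rfl|rfl|rfl|rfl|rfl|rfl|rfl|rfl|rfl|rfl|rfl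
    · exact absurd hnp (by decide)
    · exact absurd hnp (by decide)
    · exact absurd hnp (by decide)
    · exact (hne4_14).symm
    · exact (hne5_14).symm
    · exact (hne6_14).symm
    · exact (hne7_14).symm
    · exact absurd hnp (by decide)
    · exact absurd hnp (by decide)
    · exact absurd hnp (by decide)
    · exact absurd hnp (by decide)
    · exact absurd hnp (by decide)
    · exact (hne13_14).symm
    · exact absurd rfl hmn
    · exact hne14_15
    · exact hne14_16
  · rcases (by omega : n = 1 ∨ n = 2 ∨ n = 3 ∨ n = 4 ∨ n = 5 ∨ n = 6 ∨ n = 7 ∨ n = 8 ∨ n = 9 ∨ n = 10 ∨ n = 11 ∨ n = 12 ∨ n = 13 ∨ n = 14 ∨ n = 15 ∨ n = 16) with rfl|rfl|rfl|rfl|rfl|rfl|rfl|rfl|rfl|rfl|rfl|rfl|rfl|rfl|rfl|rfl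
    · exact absurd hnp (by decide)
    · exact absurd hnp (by decide)
    · exact absurd hnp (by decide)
    · exact absurd hnp (by decide)
    · exact (hne5_15).symm
    · exact (hne6_15).symm
    · exact (hne7_15).symm
    · exact absurd hnp (by decide)
    · exact absurd hnp (by decide)
    · exact absurd hnp (by decide)
    · exact absurd hnp (by decide)
    · exact absurd hnp (by decide)
    · exact absurd hnp (by decide)
    · exact (hne14_15).symm
    · exact absurd rfl hmn
    · exact hne15_16
  · rcases (by omega : n = 1 ∨ n = 2 ∨ n = 3 ∨ n = 4 ∨ n = 5 ∨ n = 6 ∨ n = 7 ∨ n = 8 ∨ n = 9 ∨ n = 10 ∨ n = 11 ∨ n = 12 ∨ n = 13 ∨ n = 14 ∨ n = 15 ∨ n = 16) with rfl|rfl|rfl|rfl|rfl|rfl|rfl|rfl|rfl|rfl|rfl|rfl|rfl|rfl|rfl|rfl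
    · exact absurd hnp (by decide)
    · exact absurd hnp (by decide)
    · exact absurd hnp (by decide)
    · exact absurd hnp (by decide)
    · exact (hne5_16).symm
    · exact (hne6_16).symm
    · exact (hne7_16).symm
    · exact absurd hnp (by decide)
    · exact absurd hnp (by decide)
    · exact absurd hnp (by decide)
    · exact absurd hnp (by decide)
    · exact absurd hnp (by decide)
    · exact absurd hnp (by decide)
    · exact (hne14_16).symm
    · exact (hne15_16).symm
    · exact absurd rfl hmn

set_option maxHeartbeats 2000000 in
theorem colMem (C : Finset ℕ) (a0 d p s3 s4 s5 al b c q e3a e3b L4 L5 f6a f6b : ℕ)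
    (hm1 : a0 ∈ C) (hm2 : d ∈ C) (hm3 : p ∈ C) (hm4 : s3 ∈ C) (hm5 : s4 ∈ C) (hm6 : s5 ∈ C) (hm7 : al ∈ C) (hm8 : b ∈ C) (hm9 : c ∈ C) (hm10 : q ∈ C) (hm11 : e3a ∈ C) (hm12 : e3b ∈ C) (hm13 : L4 ∈ C) (hm14 : L5 ∈ C) (hm15 : f6a ∈ C) (hm16 : f6b ∈ C) :
    ∀ n : ℕ, 1 ≤ n → n ≤ 16 → colF a0 d p s3 s4 s5 al b c q e3a e3b L4 L5 f6a f6b n ∈ C := by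
  intro n hn1 hn2
  rcases (by omega : n = 1 ∨ n = 2 ∨ n = 3 ∨ n = 4 ∨ n = 5 ∨ n = 6 ∨ n = 7 ∨ n = 8 ∨ n = 9 ∨ n = 10 ∨ n = 11 ∨ n = 12 ∨ n = 13 ∨ n = 14 ∨ n = 15 ∨ n = 16) with rfl|rfl|rfl|rfl|rfl|rfl|rfl|rfl|rfl|rfl|rfl|rfl|rfl|rfl|rfl|rfl
  · exact hm1
  · exact hm2
  · exact hm3
  · exact hm4
  · exact hm5
  · exact hm6
  · exact hm7
  · exact hm8
  · exact hm9
  · exact hm10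
  · exact hm11
  · exact hm12
  · exact hm13
  · exact hm14
  · exact hm15
  · exact hm16

set_option maxHeartbeats 2000000 in
theorem build (C C₁ Cl : Finset ℕ) (a0 al d q s3 s4 s5 L5 : ℕ)
    (hC : C.card = 6) (h1 : C₁ ⊆ C) (hl : Cl ⊆ C) (hc1 : C₁.card = 4) (hcl : Cl.card = 4)
    (ha0 : a0 ∈ C₁) (halCl : al ∈ Cl)
    (hd1 : d ∈ C₁) (hda : d ≠ a0)
    (hqC : q ∈ C) (hq1 : q ∉ C₁)
    (hs31 : s3 ∈ C₁) (hs3d : s3 ≠ d)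
    (hs5Cl : s5 ∈ Cl) (hs5al : s5 ≠ al) (hs5d : s5 ≠ d) (hs5q : s5 ≠ q) (hs5s3 : s5 ≠ s3)
    (hL5d : L5 ≠ d) (hL5q : L5 ≠ q) (hL5s3 : L5 ≠ s3)
    (hB : C \ Cl = {s4, L5}) (hcase : s4 = d ∨ s4 = q) :
    ∃ b c p e3a e3b L4 f6a f6b : ℕ,
      C₁ = {a0, b, c, d} ∧
      Cl = {s5, al, f6a, f6b} ∧
      a0 ∈ C ∧
      d ∈ C ∧
      p ∈ C ∧
      s3 ∈ C ∧
      s4 ∈ C ∧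
      s5 ∈ C ∧
      al ∈ C ∧
      b ∈ C ∧
      c ∈ C ∧
      q ∈ C ∧
      e3a ∈ C ∧
      e3b ∈ C ∧
      L4 ∈ C ∧
      L5 ∈ C ∧
      f6a ∈ C ∧
      f6b ∈ C ∧
      a0 ≠ d ∧
      a0 ≠ p ∧
      a0 ≠ b ∧
      a0 ≠ c ∧
      a0 ≠ q ∧
      d ≠ p ∧
      d ≠ s3 ∧
      d ≠ b ∧
      d ≠ c ∧
      d ≠ q ∧
      d ≠ e3a ∧
      d ≠ e3b ∧
      p ≠ s3 ∧
      p ≠ s4 ∧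
      p ≠ b ∧
      p ≠ c ∧
      p ≠ q ∧
      p ≠ e3a ∧
      p ≠ e3b ∧
      p ≠ L4 ∧
      s3 ≠ s4 ∧
      s3 ≠ s5 ∧
      s3 ≠ q ∧
      s3 ≠ e3a ∧
      s3 ≠ e3b ∧
      s3 ≠ L4 ∧
      s3 ≠ L5 ∧
      s4 ≠ s5 ∧
      s4 ≠ al ∧
      s4 ≠ e3a ∧
      s4 ≠ e3b ∧
      s4 ≠ L4 ∧
      s4 ≠ L5 ∧
      s4 ≠ f6a ∧
      s4 ≠ f6b ∧
      s5 ≠ al ∧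
      s5 ≠ L4 ∧
      s5 ≠ L5 ∧
      s5 ≠ f6a ∧
      s5 ≠ f6b ∧
      al ≠ L5 ∧
      al ≠ f6a ∧
      al ≠ f6b ∧
      b ≠ c ∧
      b ≠ q ∧
      c ≠ q ∧
      q ≠ e3a ∧
      q ≠ e3b ∧
      e3a ≠ e3b ∧
      e3a ≠ L4 ∧
      e3b ≠ L4 ∧
      L4 ≠ L5 ∧
      L5 ≠ f6a ∧
      L5 ≠ f6b ∧
      f6a ≠ f6b := by
  -- extract p
  have hAc : (C \ C₁).card = 2 := by rw [Finset.card_sdiff_of_subset h1, hC, hc1]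
  obtain ⟨x, y, hxy, hAeq⟩ := Finset.card_eq_two.mp hAc
  have hqA : q ∈ C \ C₁ := Finset.mem_sdiff.mpr ⟨hqC, hq1⟩
  obtain ⟨p, hpq, hAq⟩ := pair_other hxy hAeq hqA
  have hpA : p ∈ C \ C₁ := by rw [hAq]; simp
  obtain ⟨hpC, hpn1⟩ := Finset.mem_sdiff.mp hpA
  -- extract b c
  have hsub1 : ({a0, d} : Finset ℕ) ⊆ C₁ := by
    simp [Finset.insert_subset_iff, ha0, hd1]
  have hbccard : (C₁ \ {a0, d}).card = 2 := by
    rw [Finset.card_sdiff_of_subset hsub1, hc1, Finset.card_pair (Ne.symm hda)]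
  obtain ⟨b, c, hbc, hbceq⟩ := Finset.card_eq_two.mp hbccard
  have hbmem : b ∈ C₁ \ {a0, d} := by rw [hbceq]; simp
  have hcmem : c ∈ C₁ \ {a0, d} := by rw [hbceq]; simp
  have hb1 := (Finset.mem_sdiff.mp hbmem).1
  have hcc1 := (Finset.mem_sdiff.mp hcmem).1
  obtain ⟨hba', hbd'⟩ := not_or.mp (by simpa using (Finset.mem_sdiff.mp hbmem).2)
  obtain ⟨hca', hcd'⟩ := not_or.mp (by simpa using (Finset.mem_sdiff.mp hcmem).2)
  have hba : b ≠ a0 := hba'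
  have hbd : b ≠ d := hbd'
  have hca : c ≠ a0 := hca'
  have hcd : c ≠ d := hcd'
  have hC1eq : C₁ = {a0, b, c, d} := by
    have hu := Finset.union_sdiff_of_subset hsub1
    rw [hbceq] at hu
    ext z
    rw [← hu]
    simp only [Finset.mem_union, Finset.mem_insert, Finset.mem_singleton]
    tauto
  -- extract e3a e3b
  have hsub2 : ({d, s3} : Finset ℕ) ⊆ C₁ := by
    simp [Finset.insert_subset_iff, hd1, hs31]
  have he3card : (C₁ \ {d, s3}).card = 2 := by
    rw [Finset.card_sdiff_of_subset hsub2, hc1, Finset.card_pair (Ne.symm hs3d)]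
  obtain ⟨e3a, e3b, he3ab, he3eq⟩ := Finset.card_eq_two.mp he3card
  have he3am : e3a ∈ C₁ \ {d, s3} := by rw [he3eq]; simp
  have he3bm : e3b ∈ C₁ \ {d, s3} := by rw [he3eq]; simp
  have he3a1 := (Finset.mem_sdiff.mp he3am).1
  have he3b1 := (Finset.mem_sdiff.mp he3bm).1
  obtain ⟨he3ad', he3as3'⟩ := not_or.mp (by simpa using (Finset.mem_sdiff.mp he3am).2)
  obtain ⟨he3bd', he3bs3'⟩ := not_or.mp (by simpa using (Finset.mem_sdiff.mp he3bm).2)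
  have he3ad : e3a ≠ d := he3ad'
  have he3as3 : e3a ≠ s3 := he3as3'
  have he3bd : e3b ≠ d := he3bd'
  have he3bs3 : e3b ≠ s3 := he3bs3'
  -- extract f6a f6b
  have hsub3 : ({al, s5} : Finset ℕ) ⊆ Cl := by
    simp [Finset.insert_subset_iff, halCl, hs5Cl]
  have hf6card : (Cl \ {al, s5}).card = 2 := by
    rw [Finset.card_sdiff_of_subset hsub3, hcl, Finset.card_pair (Ne.symm hs5al)]
  obtain ⟨f6a, f6b, hf6ab, hf6eq⟩ := Finset.card_eq_two.mp hf6card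
  have hf6am : f6a ∈ Cl \ {al, s5} := by rw [hf6eq]; simp
  have hf6bm : f6b ∈ Cl \ {al, s5} := by rw [hf6eq]; simp
  have hf6aCl := (Finset.mem_sdiff.mp hf6am).1
  have hf6bCl := (Finset.mem_sdiff.mp hf6bm).1
  obtain ⟨hf6aal', hf6as5'⟩ := not_or.mp (by simpa using (Finset.mem_sdiff.mp hf6am).2)
  obtain ⟨hf6bal', hf6bs5'⟩ := not_or.mp (by simpa using (Finset.mem_sdiff.mp hf6bm).2)
  have hf6aal : f6a ≠ al := hf6aal'
  have hf6as5 : f6a ≠ s5 := hf6as5'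
  have hf6bal : f6b ≠ al := hf6bal'
  have hf6bs5 : f6b ≠ s5 := hf6bs5'
  have hCleq : Cl = {s5, al, f6a, f6b} := by
    have hu := Finset.union_sdiff_of_subset hsub3
    rw [hf6eq] at hu
    ext z
    rw [← hu]
    simp only [Finset.mem_union, Finset.mem_insert, Finset.mem_singleton]
    tauto
  -- s4, L5 facts
  have hs4m : s4 ∈ C \ Cl := by rw [hB]; simp
  have hL5m : L5 ∈ C \ Cl := by rw [hB]; simp
  have hs4C := (Finset.mem_sdiff.mp hs4m).1
  have hs4nCl := (Finset.mem_sdiff.mp hs4m).2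
  have hL5C := (Finset.mem_sdiff.mp hL5m).1
  have hL5nCl := (Finset.mem_sdiff.mp hL5m).2
  rcases hcase with h | h
  · subst h
    exact ⟨b, c, p, e3a, e3b, q, f6a, f6b, hC1eq, hCleq, h1 ha0, h1 hd1, hpC, h1 hs31, hs4C, hl hs5Cl, hl halCl, h1 hb1, h1 hcc1, hqC, h1 he3a1, h1 he3b1, hqC, hL5C, hl hf6aCl, hl hf6bCl, (Ne.symm hda), ne_of_mem_of_not_mem ha0 hpn1, (Ne.symm hba), (Ne.symm hca), ne_of_mem_of_not_mem ha0 hq1, ne_of_mem_of_not_mem hd1 hpn1, (Ne.symm hs3d), (Ne.symm hbd), (Ne.symm hcd), ne_of_mem_of_not_mem hd1 hq1, (Ne.symm he3ad), (Ne.symm he3bd), (Ne.symm (ne_of_mem_of_not_mem hs31 hpn1)), (Ne.symm (ne_of_mem_of_not_mem hd1 hpn1)), (Ne.symm (ne_of_mem_of_not_mem hb1 hpn1)), (Ne.symm (ne_of_mem_of_not_mem hcc1 hpn1)), hpq, (Ne.symm (ne_of_mem_of_not_mem he3a1 hpn1)), (Ne.symm (ne_of_mem_of_not_mem he3b1 hpn1)),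 hpq, hs3d, (Ne.symm hs5s3), ne_of_mem_of_not_mem hs31 hq1, (Ne.symm he3as3), (Ne.symm he3bs3), ne_of_mem_of_not_mem hs31 hq1, (Ne.symm hL5s3), (Ne.symm hs5d), (Ne.symm (ne_of_mem_of_not_mem halCl hs4nCl)), (Ne.symm he3ad), (Ne.symm he3bd), ne_of_mem_of_not_mem hd1 hq1, (Ne.symm hL5d), (Ne.symm (ne_of_mem_of_not_mem hf6aCl hs4nCl)), (Ne.symm (ne_of_mem_of_not_mem hf6bCl hs4nCl)), hs5al, hs5q, ne_of_mem_of_not_mem hs5Cl hL5nCl, (Ne.symm hf6as5), (Ne.symm hf6bs5), ne_of_mem_of_not_mem halCl hL5nCl, (Ne.symm hf6aal), (Ne.symm hf6bal), hbc, ne_of_mem_of_not_mem hb1 hq1, ne_of_mem_of_not_mem hcc1 hq1, (Ne.symm (ne_of_mem_of_not_mem he3a1 hq1)), (Ne.symm (ne_of_mem_of_not_mem he3b1 hq1)), he3ab, ne_of_mem_of_not_mem he3a1 hq1, ne_of_mem_of_not_mem he3b1 hq1, (Ne.symm hL5q), (Ne.symm (ne_of_mem_of_not_mem hf6aCl hL5nCl)),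 (Ne.symm (ne_of_mem_of_not_mem hf6bCl hL5nCl)), hf6ab⟩
  · subst h
    exact ⟨b, c, p, e3a, e3b, d, f6a, f6b, hC1eq, hCleq, h1 ha0, h1 hd1, hpC, h1 hs31, hs4C, hl hs5Cl, hl halCl, h1 hb1, h1 hcc1, hqC, h1 he3a1, h1 he3b1, h1 hd1, hL5C, hl hf6aCl, hl hf6bCl, (Ne.symm hda), ne_of_mem_of_not_mem ha0 hpn1, (Ne.symm hba), (Ne.symm hca), ne_of_mem_of_not_mem ha0 hq1, ne_of_mem_of_not_mem hd1 hpn1, (Ne.symm hs3d), (Ne.symm hbd), (Ne.symm hcd), ne_of_mem_of_not_mem hd1 hq1, (Ne.symm he3ad), (Ne.symm he3bd), (Ne.symm (ne_of_mem_of_not_mem hs31 hpn1)), hpq, (Ne.symm (ne_of_mem_of_not_mem hb1 hpn1)), (Ne.symm (ne_of_mem_of_not_mem hcc1 hpn1)), hpq, (Ne.symm (ne_of_mem_of_not_mem he3a1 hpn1)), (Ne.symm (ne_of_mem_of_not_mem he3b1 hpn1)), (Ne.symm (ne_of_mem_of_not_mem hd1 hpn1)), ne_of_mem_of_not_mem hs31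 hq1, (Ne.symm hs5s3), ne_of_mem_of_not_mem hs31 hq1, (Ne.symm he3as3), (Ne.symm he3bs3), hs3d, (Ne.symm hL5s3), (Ne.symm hs5q), (Ne.symm (ne_of_mem_of_not_mem halCl hs4nCl)), (Ne.symm (ne_of_mem_of_not_mem he3a1 hq1)), (Ne.symm (ne_of_mem_of_not_mem he3b1 hq1)), (Ne.symm (ne_of_mem_of_not_mem hd1 hq1)), (Ne.symm hL5q), (Ne.symm (ne_of_mem_of_not_mem hf6aCl hs4nCl)), (Ne.symm (ne_of_mem_of_not_mem hf6bCl hs4nCl)), hs5al, hs5d, ne_of_mem_of_not_mem hs5Cl hL5nCl, (Ne.symm hf6as5), (Ne.symm hf6bs5), ne_of_mem_of_not_mem halCl hL5nCl, (Ne.symm hf6aal), (Ne.symm hf6bal), hbc, ne_of_mem_of_not_mem hb1 hq1, ne_of_mem_of_not_mem hcc1 hq1, (Ne.symm (ne_of_mem_of_not_mem he3a1 hq1)), (Ne.symm (ne_of_mem_of_not_mem he3b1 hq1)), he3ab, he3ad, he3bd, (Ne.symm hL5d), (Ne.symm (ne_of_mem_of_not_mem hf6aCl hL5nCl)), (Ne.symm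 (ne_of_mem_of_not_mem hf6bCl hL5nCl)), hf6ab⟩

set_option maxHeartbeats 2000000 in
theorem choice (C C₁ Cl : Finset ℕ) (hC : C.card = 6) (h1 : C₁ ⊆ C) (hl : Cl ⊆ C)
    (hc1 : C₁.card = 4) (hcl : Cl.card = 4) (a0 : ℕ) (ha0 : a0 ∈ C₁) (al : ℕ) (halCl : al ∈ Cl) :
    ∃ d q s3 s4 s5 L5 b c p e3a e3b L4 f6a f6b : ℕ,
      C₁ = {a0, b, c, d} ∧
      Cl = {s5, al, f6a, f6b} ∧
      a0 ∈ C ∧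
      d ∈ C ∧
      p ∈ C ∧
      s3 ∈ C ∧
      s4 ∈ C ∧
      s5 ∈ C ∧
      al ∈ C ∧
      b ∈ C ∧
      c ∈ C ∧
      q ∈ C ∧
      e3a ∈ C ∧
      e3b ∈ C ∧
      L4 ∈ C ∧
      L5 ∈ C ∧
      f6a ∈ C ∧
      f6b ∈ C ∧
      a0 ≠ d ∧
      a0 ≠ p ∧
      a0 ≠ b ∧
      a0 ≠ c ∧
      a0 ≠ q ∧
      d ≠ p ∧
      d ≠ s3 ∧
      d ≠ b ∧
      d ≠ c ∧
      d ≠ q ∧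
      d ≠ e3a ∧
      d ≠ e3b ∧
      p ≠ s3 ∧
      p ≠ s4 ∧
      p ≠ b ∧
      p ≠ c ∧
      p ≠ q ∧
      p ≠ e3a ∧
      p ≠ e3b ∧
      p ≠ L4 ∧
      s3 ≠ s4 ∧
      s3 ≠ s5 ∧
      s3 ≠ q ∧
      s3 ≠ e3a ∧
      s3 ≠ e3b ∧
      s3 ≠ L4 ∧
      s3 ≠ L5 ∧
      s4 ≠ s5 ∧
      s4 ≠ al ∧
      s4 ≠ e3a ∧
      s4 ≠ e3b ∧
      s4 ≠ L4 ∧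
      s4 ≠ L5 ∧
      s4 ≠ f6a ∧
      s4 ≠ f6b ∧
      s5 ≠ al ∧
      s5 ≠ L4 ∧
      s5 ≠ L5 ∧
      s5 ≠ f6a ∧
      s5 ≠ f6b ∧
      al ≠ L5 ∧
      al ≠ f6a ∧
      al ≠ f6b ∧
      b ≠ c ∧
      b ≠ q ∧
      c ≠ q ∧
      q ≠ e3a ∧
      q ≠ e3b ∧
      e3a ≠ e3b ∧
      e3a ≠ L4 ∧
      e3b ≠ L4 ∧
      L4 ≠ L5 ∧
      L5 ≠ f6a ∧
      L5 ≠ f6b ∧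
      f6a ≠ f6b := by
  have hBc : (C \ Cl).card = 2 := by rw [Finset.card_sdiff_of_subset hl, hC, hcl]
  have hAc : (C \ C₁).card = 2 := by rw [Finset.card_sdiff_of_subset h1, hC, hc1]
  obtain ⟨u, v, huv, hBeq⟩ := Finset.card_eq_two.mp hBc
  rcases Finset.eq_empty_or_nonempty ((C \ C₁) ∩ (C \ Cl)) with hint | ⟨q, hq⟩
  · -- (C \ C₁) ∩ (C \ Cl) = ∅ : C \ Cl ⊆ C₁
    have hBsub : ∀ z ∈ C \ Cl, z ∈ C₁ := by
      intro z hz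
      by_contra hz1
      have hzA : z ∈ C \ C₁ := Finset.mem_sdiff.mpr ⟨(Finset.mem_sdiff.mp hz).1, hz1⟩
      have : z ∈ (C \ C₁) ∩ (C \ Cl) := Finset.mem_inter.mpr ⟨hzA, hz⟩
      rw [hint] at this
      exact absurd this (Finset.notMem_empty z)
    have huB : u ∈ C \ Cl := by rw [hBeq]; simp
    have hvB : v ∈ C \ Cl := by rw [hBeq]; simp
    have hu1 := hBsub u huB
    have hv1 := hBsub v hvB
    obtain ⟨dd, LL, hdd1, hLL1, hddLL, hdda, hBdd⟩ :
        ∃ dd LL, dd ∈ C₁ ∧ LL ∈ C₁ ∧ dd ≠ LL ∧ dd ≠ a0 ∧ C \ Cl = {dd, LL} := by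
      by_cases hu : u = a0
      · exact ⟨v, u, hv1, hu1, (Ne.symm huv), fun h => huv (by rw [hu, ← h]), by
          rw [hBeq]; exact Finset.pair_comm u v⟩
      · exact ⟨u, v, hu1, hv1, huv, hu, hBeq⟩
    have hddm : dd ∈ C \ Cl := by rw [hBdd]; simp
    have hddnCl := (Finset.mem_sdiff.mp hddm).2
    obtain ⟨q, hqA⟩ : (C \ C₁).Nonempty := Finset.card_pos.mp (by omega)
    obtain ⟨hqC, hq1⟩ := Finset.mem_sdiff.mp hqA
    have hqCl : q ∈ Cl := by
      by_contra hq2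
      exact hq1 (hBsub q (Finset.mem_sdiff.mpr ⟨hqC, hq2⟩))
    obtain ⟨s3, hs31, hs3d, hs3L, -⟩ := pick3 C₁ (by omega) dd LL LL
    obtain ⟨s5, hs5Cl, hs5al, hs5q, hs5s3⟩ := pick3 Cl (by omega) al q s3
    obtain ⟨b, c, p, e3a, e3b, L4, f6a, f6b, hbody⟩ :=
      build C C₁ Cl a0 al dd q s3 dd s5 LL hC h1 hl hc1 hcl ha0 halCl hdd1 hdda hqC hq1
        hs31 hs3d hs5Cl hs5al (ne_of_mem_of_not_mem hs5Cl hddnCl) hs5q hs5s3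
        (Ne.symm hddLL) (ne_of_mem_of_not_mem hLL1 hq1) (Ne.symm hs3L) hBdd (Or.inl rfl)
    exact ⟨dd, q, s3, dd, s5, LL, b, c, p, e3a, e3b, L4, f6a, f6b, hbody⟩
  · -- q ∈ (C \ C₁) ∩ (C \ Cl)
    obtain ⟨hqA, hqB⟩ := Finset.mem_inter.mp hq
    obtain ⟨hqC, hq1⟩ := Finset.mem_sdiff.mp hqA
    have hqnCl := (Finset.mem_sdiff.mp hqB).2
    obtain ⟨w, hwq, hBq⟩ := pair_other huv hBeq hqB
    have hwm : w ∈ C \ Cl := by rw [hBq]; simp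
    obtain ⟨d, hd1, hda, hdw, -⟩ := pick3 C₁ (by omega) a0 w w
    obtain ⟨s3, hs31, hs3d, hs3w, -⟩ := pick3 C₁ (by omega) d w w
    obtain ⟨s5, hs5Cl, hs5al, hs5d, hs5s3⟩ := pick3 Cl (by omega) al d s3
    obtain ⟨b, c, p, e3a, e3b, L4, f6a, f6b, hbody⟩ :=
      build C C₁ Cl a0 al d q s3 q s5 w hC h1 hl hc1 hcl ha0 halCl hd1 hda hqC hq1
        hs31 hs3d hs5Cl hs5al hs5d (ne_of_mem_of_not_mem hs5Cl hqnCl) hs5s3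
        (Ne.symm hdw) hwq (Ne.symm hs3w) hBq (Or.inr rfl)
    exact ⟨d, q, s3, q, s5, w, b, c, p, e3a, e3b, L4, f6a, f6b, hbody⟩

set_option maxHeartbeats 2000000 in
theorem twoSided_cat434334 :
    TwoSidedPrecolorable 6 (fun i => if i = 1 ∨ i = 3 ∨ i = 6 then 4 else 3) 6 := by
  intro C C₁ Cl hC h1 hl hc1 hcl α₀ ha0 αl hal
  have hc1' : C₁.card = 4 := by simpa using hc1
  have hcl' : Cl.card = 4 := by simpa using hcl
  obtain ⟨d, q, s3, s4, s5, L5, b, c, p, e3a, e3b, L4, f6a, f6b, hC1eq, hCleq, hm1, hm2, hm3, hm4, hm5, hm6, hm7, hm8, hm9, hm10, hm11, hm12, hm13, hm14, hm15, hm16, hne1_2, hne1_3, hne1_8, hne1_9, hne1_10, hne2_3, hne2_4, hne2_8, hne2_9, hne2_10, hne2_11, hne2_12, hne3_4, hne3_5, hne3_8, hne3_9, hne3_10, hne3_11, hne3_12, hne3_13, hne4_5, hne4_6, hne4_10, hne4_11, hne4_12, hne4_13, hne4_14, hne5_6, hne5_7, hne5_11, hne5_12, hne5_13, hne5_14, hne5_15,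 hne5_16, hne6_7, hne6_13, hne6_14, hne6_15, hne6_16, hne7_14, hne7_15, hne7_16, hne8_9, hne8_10, hne9_10, hne10_11, hne10_12, hne11_12, hne11_13, hne12_13, hne13_14, hne14_15, hne14_16, hne15_16⟩ := choice C C₁ Cl hC h1 hl hc1' hcl' α₀ ha0 αl hal
  show CatPrecolorExists 6 DD C C₁ Cl α₀ αl
  refine ⟨fun e => colF α₀ d p s3 s4 s5 αl b c q e3a e3b L4 L5 f6a f6b (labD e), ?_, ?_, ?_, ?_, ?_, ?_⟩
  · -- colors in C
    intro e
    refine Sym2.ind (fun u v => ?_) e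
    intro he
    have hadj := (Cat 6 DD).mem_edgeSet.mp he
    have hbnd := memDec u v hadj
    simp only [labD_mk]
    exact colMem C α₀ d p s3 s4 s5 αl b c q e3a e3b L4 L5 f6a f6b hm1 hm2 hm3 hm4 hm5 hm6 hm7 hm8 hm9 hm10 hm11 hm12 hm13 hm14 hm15 hm16 (labF u v) hbnd.1 hbnd.2
  · -- strong edge coloring
    intro e
    refine Sym2.ind (fun u₁ v₁ => ?_) e
    intro heE f
    refine Sym2.ind (fun u₂ v₂ => ?_) f
    intro hfE hne hnear
    have hadj1 := (Cat 6 DD).mem_edgeSet.mp heE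
    have hadj2 := (Cat 6 DD).mem_edgeSet.mp hfE
    have hne' : ¬((u₁ = u₂ ∧ v₁ = v₂) ∨ (u₁ = v₂ ∧ v₁ = u₂)) := fun h => hne (Sym2.eq_iff.mpr h)
    obtain ⟨hne1, hne2⟩ := not_or.mp hne'
    have hnear' : ∃ a b2 : VV, a ∈ s(u₁, v₁) ∧ b2 ∈ s(u₂, v₂) ∧ (a = b2 ∨ (Cat 6 DD).Adj a b2) := hnear
    obtain ⟨a, b2, ha, hb, hab⟩ := hnear'
    have hbnd1 := memDec u₁ v₁ hadj1
    have hbnd2 := memDec u₂ v₂ hadj2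
    have hx := Sym2.mem_iff.mp ha
    have hy := Sym2.mem_iff.mp hb
    have key := keyDec u₁ v₁ u₂ v₂ hadj1 hadj2 hne1 hne2 (by
      rcases hx with rfl | rfl <;> rcases hy with rfl | rfl
      · exact Or.inl hab
      · exact Or.inr (Or.inl hab)
      · exact Or.inr (Or.inr (Or.inl hab))
      · exact Or.inr (Or.inr (Or.inr hab)))
    simp only [labD_mk]
    exact colNe α₀ d p s3 s4 s5 αl b c q e3a e3b L4 L5 f6a f6b hne1_2 hne1_3 hne1_8 hne1_9 hne1_10 hne2_3 hne2_4 hne2_8 hne2_9 hne2_10 hne2_11 hne2_12 hne3_4 hne3_5 hne3_8 hne3_9 hne3_10 hne3_11 hne3_12 hne3_13 hne4_5 hne4_6 hne4_10 hne4_11 hne4_12 hne4_13 hne4_14 hne5_6 hne5_7 hne5_11 hne5_12 hne5_13 hne5_14 hne5_15 hne5_16 hne6_7 hne6_13 hne6_14 hne6_15 hne6_16 hne7_14 hne7_15 hne7_16 hne8_9 hne8_10 hne9_10 hne10_11 hne10_12 hne11_12 hne11_13 hne12_13 hne13_14 hne14_15 hne14_16 hne15_16 (labF u₁ v₁) (labF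 u₂ v₂)
      hbnd1.1 hbnd1.2 hbnd2.1 hbnd2.2 key.1 key.2
  · -- E1 image
    refine Set.Subset.antisymm ?_ ?_
    · rintro z ⟨e, he, rfl⟩
      revert he
      refine Sym2.ind (fun u v => ?_) e
      rintro ⟨heE, hex⟩
      have hadj := (Cat 6 DD).mem_edgeSet.mp heE
      have hx := Sym2.mem_iff.mp hex
      rcases E1lab u v hadj hx with h | h | h | h <;>
        simp only [labD_mk, h, hC1eq, colF] <;> simp
    · intro z hz
      rw [hC1eq] at hz
      simp only [Finset.coe_insert, Set.mem_insert_iff, Finset.coe_singleton,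
        Set.mem_singleton_iff] at hz
      rcases hz with rfl | rfl | rfl | rfl
      · exact ⟨s(x0v, x1v), ⟨(Cat 6 DD).mem_edgeSet.mpr adj01, by simp [Sym2.mem_iff, x0v, x1v]⟩,
          by simp only [labD_mk]; rfl⟩
      · exact ⟨s(l00v, x1v), ⟨(Cat 6 DD).mem_edgeSet.mpr adjl00, by simp [Sym2.mem_iff, l00v, x1v]⟩,
          by simp only [labD_mk]; rfl⟩
      · exact ⟨s(l01v, x1v), ⟨(Cat 6 DD).mem_edgeSet.mpr adjl01, by simp [Sym2.mem_iff, l01v, x1v]⟩,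
          by simp only [labD_mk]; rfl⟩
      · exact ⟨s(x1v, x2v), ⟨(Cat 6 DD).mem_edgeSet.mpr adj12, by simp [Sym2.mem_iff, x1v, x2v]⟩,
          by simp only [labD_mk]; rfl⟩
  · -- E6 image
    refine Set.Subset.antisymm ?_ ?_
    · rintro z ⟨e, he, rfl⟩
      revert he
      refine Sym2.ind (fun u v => ?_) e
      rintro ⟨heE, hex⟩
      have hadj := (Cat 6 DD).mem_edgeSet.mp heE
      have hx := Sym2.mem_iff.mp hex
      rcases E6lab u v hadj hx with h | h | h | h <;>
        simp only [labD_mk, h, hCleq, colF] <;> simp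
    · intro z hz
      rw [hCleq] at hz
      simp only [Finset.coe_insert, Set.mem_insert_iff, Finset.coe_singleton,
        Set.mem_singleton_iff] at hz
      rcases hz with rfl | rfl | rfl | rfl
      · exact ⟨s(x5v, x6v), ⟨(Cat 6 DD).mem_edgeSet.mpr adj56, by simp [Sym2.mem_iff, x5v, x6v]⟩,
          by simp only [labD_mk]; rfl⟩
      · exact ⟨s(x6v, x7v), ⟨(Cat 6 DD).mem_edgeSet.mpr adj67, by simp [Sym2.mem_iff, x6v, x7v]⟩,
          by simp only [labD_mk]; rfl⟩
      · exact ⟨s(l50v, x6v), ⟨(Cat 6 DD).mem_edgeSet.mpr adjl50, by simp [Sym2.mem_iff, l50v, x6v]⟩,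
          by simp only [labD_mk]; rfl⟩
      · exact ⟨s(l51v, x6v), ⟨(Cat 6 DD).mem_edgeSet.mpr adjl51, by simp [Sym2.mem_iff, l51v, x6v]⟩,
          by simp only [labD_mk]; rfl⟩
  · simp only [labD_mk]; rfl
  · simp only [labD_mk]; rfl
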